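/- Let k₁, k₂ ∈ ℕ, k₃ ∈ ℕ with k₃ ≥ 1, suppose ω² = (4π²/(εμ))·(k₁²/l₁² + k₂²/l₂² + k₃²/(4(l₃⁺)²)), define w : ℝ³ → ℝ by w(x) = cos(2πk₁x₁/l₁)·cos(2πk₂x₂/l₂)·sin(πk₃x₃/l₃⁺), and set H := (−∂₃w, 0, ∂₁w) and E := (−iωε)⁻¹·(∂₁∂₂w, −∂₁²w − ∂₃²w, ∂₂∂₃w). Then curl E = iωμ·H and curl H = −iωε·E hold at every point of ℝ³, the components E₁ and E₂ vanish at every point with x₃ = 0 or x₃ = l₃⁺, but H₁(0,0,0) = −πk₃/l₃⁺ ≠ 0; in particular H₁ does not vanish identically on the plane {x₃ = 0}. -/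

import Mathlib

open Real Complex Filter Topology

/-- Partial derivative in the first coordinate. -/
noncomputable def pd1 {F : Type*} [NormedAddCommGroup F] [NormedSpace ℝ F]
    (f : ℝ × ℝ × ℝ → F) (x : ℝ × ℝ × ℝ) : F :=
  deriv (fun t => f (t, x.2.1, x.2.2)) x.1

/-- Partial derivative in the second coordinate. -/
noncomputable def pd2 {F : Type*} [NormedAddCommGroup F] [NormedSpace ℝ F]
    (f : ℝ × ℝ × ℝ → F) (x : ℝ × ℝ × ℝ) : F :=
  deriv (fun t => f (x.1, t, x.2.2)) x.2.1

/-- Partial derivative in the third coordinate. -/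
noncomputable def pd3 {F : Type*} [NormedAddCommGroup F] [NormedSpace ℝ F]
    (f : ℝ × ℝ × ℝ → F) (x : ℝ × ℝ × ℝ) : F :=
  deriv (fun t => f (x.1, x.2.1, t)) x.2.2

/-- Curl of a complex vector field on ℝ³. -/
noncomputable def curl3 (F : ℝ × ℝ × ℝ → ℂ × ℂ × ℂ) (x : ℝ × ℝ × ℝ) : ℂ × ℂ × ℂ :=
  (pd2 (fun y => (F y).2.2) x - pd3 (fun y => (F y).2.1) x,
   pd3 (fun y => (F y).1) x - pd1 (fun y => (F y).2.2) x,
   pd1 (fun y => (F y).2.1) x - pd2 (fun y => (F y).1) x)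

/-- Divergence of a complex vector field on ℝ³. -/
noncomputable def div3 (F : ℝ × ℝ × ℝ → ℂ × ℂ × ℂ) (x : ℝ × ℝ × ℝ) : ℂ :=
  pd1 (fun y => (F y).1) x + pd2 (fun y => (F y).2.1) x + pd3 (fun y => (F y).2.2) x

/-- Laplacian of a scalar function on ℝ³. -/
noncomputable def lap {F : Type*} [NormedAddCommGroup F] [NormedSpace ℝ F]
    (f : ℝ × ℝ × ℝ → F) (x : ℝ × ℝ × ℝ) : F :=
  pd1 (pd1 f) x + pd2 (pd2 f) x + pd3 (pd3 f) x

/-- Gradient of a complex scalar function on ℝ³. -/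
noncomputable def grad3 (f : ℝ × ℝ × ℝ → ℂ) (x : ℝ × ℝ × ℝ) : ℂ × ℂ × ℂ :=
  (pd1 f x, pd2 f x, pd3 f x)

/-!
With `H = curl (0, w, 0)` and `E = (-iωε)⁻¹ curl H`, the second Maxwell equation is built in.
By symmetry of second derivatives `curl curl H = (∂₃Δw, 0, -∂₁Δw)`, and `w` solves the Helmholtz
equation `Δw = -ω²εμ w`, so `curl E = (-iωε)⁻¹ ω²εμ H = iωμ H`. On the planes `x₃ = 0` and
`x₃ = l₃⁺` the factor `sin (πk₃x₃/l₃⁺)` of `w` and of `∂₁∂₂w` vanishes, hence so do `E₁ ∝ ∂₁∂₂w`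
and `E₂ ∝ w`; but `H₁ = -∂₃w` carries `cos (πk₃x₃/l₃⁺)` instead, and equals `-πk₃/l₃⁺` at the
origin.
-/

section

-- Closed before the theorem: the notation `ω` of this scope would capture its variable `ω`.
open scoped ContDiff

section SmoothPartials

variable {F : Type*} [NormedAddCommGroup F] [NormedSpace ℝ F] {f : ℝ × ℝ × ℝ → F}

lemma pd1_eq_fderiv (hf : Differentiable ℝ f) : pd1 f = fun x => fderiv ℝ f x (1, 0, 0) := by
  funext x
  have hγ : HasDerivAt (fun t : ℝ => (t, x.2.1, x.2.2)) ((1 : ℝ), (0 : ℝ), (0 : ℝ)) x.1 :=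
    (hasDerivAt_id _).prodMk ((hasDerivAt_const _ _).prodMk (hasDerivAt_const _ _))
  exact ((hf _).hasFDerivAt.comp_hasDerivAt x.1 hγ).deriv

lemma pd2_eq_fderiv (hf : Differentiable ℝ f) : pd2 f = fun x => fderiv ℝ f x (0, 1, 0) := by
  funext x
  have hγ : HasDerivAt (fun t : ℝ => (x.1, t, x.2.2)) ((0 : ℝ), (1 : ℝ), (0 : ℝ)) x.2.1 :=
    (hasDerivAt_const _ _).prodMk ((hasDerivAt_id _).prodMk (hasDerivAt_const _ _))
  exact ((hf _).hasFDerivAt.comp_hasDerivAt x.2.1 hγ).deriv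

lemma pd3_eq_fderiv (hf : Differentiable ℝ f) : pd3 f = fun x => fderiv ℝ f x (0, 0, 1) := by
  funext x
  have hγ : HasDerivAt (fun t : ℝ => (x.1, x.2.1, t)) ((0 : ℝ), (0 : ℝ), (1 : ℝ)) x.2.2 :=
    (hasDerivAt_const _ _).prodMk ((hasDerivAt_const _ _).prodMk (hasDerivAt_id _))
  exact ((hf _).hasFDerivAt.comp_hasDerivAt x.2.2 hγ).deriv

lemma ContDiff.fderiv_apply_const (hf : ContDiff ℝ ∞ f) (v : ℝ × ℝ × ℝ) :
    ContDiff ℝ ∞ (fun x => fderiv ℝ f x v) :=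
  (hf.fderiv_right (m := ∞) le_rfl).clm_apply contDiff_const

lemma fderiv_fderiv_apply_comm (hf : ContDiff ℝ ∞ f) (v w : ℝ × ℝ × ℝ) :
    (fun x => fderiv ℝ (fun y => fderiv ℝ f y v) x w) =
      fun x => fderiv ℝ (fun y => fderiv ℝ f y w) x v := by
  funext x
  have hd : DifferentiableAt ℝ (fderiv ℝ f) x :=
    (hf.fderiv_right (m := ∞) le_rfl).differentiable (by simp) x
  rw [fderiv_clm_apply hd (differentiableAt_const v),
    fderiv_clm_apply hd (differentiableAt_const w)]
  simp only [fderiv_fun_const, Pi.zero_apply, ContinuousLinearMap.comp_zero, zero_add,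
    ContinuousLinearMap.flip_apply]
  exact hf.contDiffAt.isSymmSndFDerivAt
    (by rw [minSmoothness_of_isRCLikeNormedField]; exact WithTop.coe_le_coe.mpr le_top) w v

lemma ContDiff.pd1 (hf : ContDiff ℝ ∞ f) : ContDiff ℝ ∞ (pd1 f) := by
  rw [pd1_eq_fderiv (hf.differentiable (by simp))]
  exact hf.fderiv_apply_const _

lemma ContDiff.pd2 (hf : ContDiff ℝ ∞ f) : ContDiff ℝ ∞ (pd2 f) := by
  rw [pd2_eq_fderiv (hf.differentiable (by simp))]
  exact hf.fderiv_apply_const _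

lemma ContDiff.pd3 (hf : ContDiff ℝ ∞ f) : ContDiff ℝ ∞ (pd3 f) := by
  rw [pd3_eq_fderiv (hf.differentiable (by simp))]
  exact hf.fderiv_apply_const _

lemma pd1_pd2_comm (hf : ContDiff ℝ ∞ f) : pd1 (pd2 f) = pd2 (pd1 f) := by
  have hd := hf.differentiable (by simp)
  have hd' v := (hf.fderiv_apply_const v).differentiable (by simp)
  rw [pd2_eq_fderiv hd, pd1_eq_fderiv hd, pd1_eq_fderiv (hd' _), pd2_eq_fderiv (hd' _),
    fderiv_fderiv_apply_comm hf]

lemma pd1_pd3_comm (hf : ContDiff ℝ ∞ f) : pd1 (pd3 f) = pd3 (pd1 f) := by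
  have hd := hf.differentiable (by simp)
  have hd' v := (hf.fderiv_apply_const v).differentiable (by simp)
  rw [pd3_eq_fderiv hd, pd1_eq_fderiv hd, pd1_eq_fderiv (hd' _), pd3_eq_fderiv (hd' _),
    fderiv_fderiv_apply_comm hf]

lemma pd2_pd3_comm (hf : ContDiff ℝ ∞ f) : pd2 (pd3 f) = pd3 (pd2 f) := by
  have hd := hf.differentiable (by simp)
  have hd' v := (hf.fderiv_apply_const v).differentiable (by simp)
  rw [pd3_eq_fderiv hd, pd2_eq_fderiv hd, pd2_eq_fderiv (hd' _), pd3_eq_fderiv (hd' _),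
    fderiv_fderiv_apply_comm hf]

end SmoothPartials

section Linearity

variable {g h : ℝ × ℝ × ℝ → ℂ}

lemma pd1_add (hg : Differentiable ℝ g) (hh : Differentiable ℝ h) :
    pd1 (fun x => g x + h x) = fun x => pd1 g x + pd1 h x :=
  funext fun _ => deriv_add (by fun_prop) (by fun_prop)

lemma pd3_add (hg : Differentiable ℝ g) (hh : Differentiable ℝ h) :
    pd3 (fun x => g x + h x) = fun x => pd3 g x + pd3 h x :=
  funext fun _ => deriv_add (by fun_prop) (by fun_prop)

lemma pd1_sub (hg : Differentiable ℝ g) (hh : Differentiable ℝ h) :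
    pd1 (fun x => g x - h x) = fun x => pd1 g x - pd1 h x :=
  funext fun _ => deriv_sub (by fun_prop) (by fun_prop)

lemma pd3_sub (hg : Differentiable ℝ g) (hh : Differentiable ℝ h) :
    pd3 (fun x => g x - h x) = fun x => pd3 g x - pd3 h x :=
  funext fun _ => deriv_sub (by fun_prop) (by fun_prop)

lemma pd1_const_mul (c : ℂ) (hg : Differentiable ℝ g) :
    pd1 (fun x => c * g x) = fun x => c * pd1 g x :=
  funext fun _ => deriv_const_mul c (by fun_prop)

lemma pd2_const_mul (c : ℂ) (hg : Differentiable ℝ g) :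
    pd2 (fun x => c * g x) = fun x => c * pd2 g x :=
  funext fun _ => deriv_const_mul c (by fun_prop)

lemma pd3_const_mul (c : ℂ) (hg : Differentiable ℝ g) :
    pd3 (fun x => c * g x) = fun x => c * pd3 g x :=
  funext fun _ => deriv_const_mul c (by fun_prop)

lemma pd1_neg : pd1 (fun x => -g x) = fun x => -pd1 g x :=
  funext fun _ => deriv.neg

lemma pd2_neg : pd2 (fun x => -g x) = fun x => -pd2 g x :=
  funext fun _ => deriv.neg

lemma pd3_neg : pd3 (fun x => -g x) = fun x => -pd3 g x :=
  funext fun _ => deriv.neg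

lemma pd1_zero : pd1 (fun _ => (0 : ℂ)) = 0 :=
  funext fun _ => deriv_const _ _

lemma pd3_zero : pd3 (fun _ => (0 : ℂ)) = 0 :=
  funext fun _ => deriv_const _ _

end Linearity

section Curl

lemma curl3_const_smul (c : ℂ) {F : ℝ × ℝ × ℝ → ℂ × ℂ × ℂ} (hF : Differentiable ℝ F) :
    curl3 (fun x => c • F x) = fun x => c • curl3 F x := by
  funext x
  simp only [curl3, Prod.smul_fst, Prod.smul_snd, smul_eq_mul]
  rw [pd1_const_mul c (by fun_prop), pd2_const_mul c (by fun_prop), pd3_const_mul c (by fun_prop),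
    pd1_const_mul c (by fun_prop), pd2_const_mul c (by fun_prop), pd3_const_mul c (by fun_prop)]
  ext <;> simp [mul_sub]

lemma ContDiff.curl3 {F : ℝ × ℝ × ℝ → ℂ × ℂ × ℂ} (hF : ContDiff ℝ ∞ F) :
    ContDiff ℝ ∞ (curl3 F) := by
  have h1 : ContDiff ℝ ∞ fun y => (F y).1 := contDiff_fst.comp hF
  have h2 : ContDiff ℝ ∞ fun y => (F y).2.1 := contDiff_fst.comp (contDiff_snd.comp hF)
  have h3 : ContDiff ℝ ∞ fun y => (F y).2.2 := contDiff_snd.comp (contDiff_snd.comp hF)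
  exact (h3.pd2.sub h2.pd3).prodMk ((h1.pd3.sub h3.pd1).prodMk (h2.pd1.sub h1.pd2))

/-- `curl (0, w, 0)`. -/
noncomputable def curlY (w : ℝ × ℝ × ℝ → ℂ) (x : ℝ × ℝ × ℝ) : ℂ × ℂ × ℂ :=
  (-(pd3 w x), 0, pd1 w x)

variable {w : ℝ × ℝ × ℝ → ℂ}

lemma ContDiff.curlY (hw : ContDiff ℝ ∞ w) : ContDiff ℝ ∞ (curlY w) :=
  hw.pd3.neg.prodMk (contDiff_const.prodMk hw.pd1)

lemma curl3_curlY (hw : ContDiff ℝ ∞ w) :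
    curl3 (curlY w) = fun x =>
      (pd1 (pd2 w) x, -(pd1 (pd1 w) x) - pd3 (pd3 w) x, pd2 (pd3 w) x) := by
  funext x
  simp only [curl3, curlY, pd3_zero, pd1_zero, pd3_neg, pd2_neg, pd1_pd2_comm hw]
  ext <;> simp only [Pi.zero_apply, sub_zero, zero_sub, neg_neg]
  ring

lemma curl3_curl3_curlY (hw : ContDiff ℝ ∞ w) :
    curl3 (curl3 (curlY w)) = fun x => (pd3 (lap w) x, 0, -(pd1 (lap w) x)) := by
  have h11 := hw.pd1.pd1.differentiable (by simp)
  have h22 := hw.pd2.pd2.differentiable (by simp)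
  have h33 := hw.pd3.pd3.differentiable (by simp)
  have hlap : lap w = fun x => pd1 (pd1 w) x + pd2 (pd2 w) x + pd3 (pd3 w) x := rfl
  rw [curl3_curlY hw, hlap]
  funext x
  simp only [curl3]
  rw [pd3_sub (by fun_prop) (by fun_prop), pd1_sub (by fun_prop) (by fun_prop), pd3_neg, pd1_neg,
    pd3_add (by fun_prop) (by fun_prop), pd3_add (by fun_prop) (by fun_prop),
    pd1_add (by fun_prop) (by fun_prop), pd1_add (by fun_prop) (by fun_prop)]
  beta_reduce
  rw [pd2_pd3_comm hw, pd2_pd3_comm hw.pd2, pd1_pd3_comm hw.pd2, ← pd1_pd2_comm hw.pd2]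
  ext <;> simp only [sub_self] <;> ring

lemma curl3_curl3_curlY_of_lap_eq (hw : ContDiff ℝ ∞ w) {c : ℂ}
    (hΔ : lap w = fun x => c * w x) :
    curl3 (curl3 (curlY w)) = fun x => (-c) • curlY w x := by
  have hd := hw.differentiable (by simp)
  rw [curl3_curl3_curlY hw, hΔ, pd3_const_mul c hd, pd1_const_mul c hd]
  funext x
  ext <;> simp [curlY]

lemma curl3_smul_curl3_curlY (K : ℂ) (hw : ContDiff ℝ ∞ w) {κ : ℂ}
    (hΔ : lap w = fun x => -κ * w x) :
    curl3 (fun x => K • curl3 (curlY w) x) = fun x => (K * κ) • curlY w x := by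
  rw [curl3_const_smul K (hw.curlY.curl3.differentiable (by simp)),
    curl3_curl3_curlY_of_lap_eq hw hΔ]
  simp_rw [smul_smul, neg_neg]

end Curl

section Separable

noncomputable def sepProd (f g h : ℝ → ℝ) (x : ℝ × ℝ × ℝ) : ℂ :=
  ((f x.1 * g x.2.1 * h x.2.2 : ℝ) : ℂ)

variable {f f' g g' h h' : ℝ → ℝ}

lemma pd1_sepProd (hf : ∀ t, HasDerivAt f (f' t) t) : pd1 (sepProd f g h) = sepProd f' g h :=
  funext fun x => by
    exact (((hf x.1).mul_const (g x.2.1)).mul_const (h x.2.2)).ofReal_comp.deriv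

lemma pd2_sepProd (hg : ∀ t, HasDerivAt g (g' t) t) : pd2 (sepProd f g h) = sepProd f g' h :=
  funext fun x => by
    exact (((hg x.2.1).const_mul (f x.1)).mul_const (h x.2.2)).ofReal_comp.deriv

lemma pd3_sepProd (hh : ∀ t, HasDerivAt h (h' t) t) : pd3 (sepProd f g h) = sepProd f g h' :=
  funext fun x => by
    exact ((hh x.2.2).const_mul (f x.1 * g x.2.1)).ofReal_comp.deriv

lemma hasDerivAt_cos_mul (a t : ℝ) :
    HasDerivAt (fun s => Real.cos (a * s)) (-a * Real.sin (a * t)) t := by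
  simpa [mul_comm] using ((hasDerivAt_id t).const_mul a).cos

lemma hasDerivAt_sin_mul (a t : ℝ) :
    HasDerivAt (fun s => Real.sin (a * s)) (a * Real.cos (a * t)) t := by
  simpa [mul_comm] using ((hasDerivAt_id t).const_mul a).sin

end Separable

section CosCosSin

variable (a b c : ℝ)

noncomputable def cosCosSin : ℝ × ℝ × ℝ → ℂ :=
  sepProd (fun t => Real.cos (a * t)) (fun t => Real.cos (b * t)) (fun t => Real.sin (c * t))

lemma contDiff_cosCosSin : ContDiff ℝ ∞ (cosCosSin a b c) :=
  ofRealCLM.contDiff.comp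
    (f := fun x : ℝ × ℝ × ℝ => Real.cos (a * x.1) * Real.cos (b * x.2.1) * Real.sin (c * x.2.2))
    (by fun_prop)

lemma pd1_pd1_cosCosSin :
    pd1 (pd1 (cosCosSin a b c)) = fun x => -(a : ℂ) ^ 2 * cosCosSin a b c x := by
  rw [cosCosSin, pd1_sepProd (hasDerivAt_cos_mul a),
    pd1_sepProd fun t => (hasDerivAt_sin_mul a t).const_mul (-a)]
  funext x
  simp only [sepProd]
  push_cast
  ring

lemma pd2_pd2_cosCosSin :
    pd2 (pd2 (cosCosSin a b c)) = fun x => -(b : ℂ) ^ 2 * cosCosSin a b c x := by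
  rw [cosCosSin, pd2_sepProd (hasDerivAt_cos_mul b),
    pd2_sepProd fun t => (hasDerivAt_sin_mul b t).const_mul (-b)]
  funext x
  simp only [sepProd]
  push_cast
  ring

lemma pd3_pd3_cosCosSin :
    pd3 (pd3 (cosCosSin a b c)) = fun x => -(c : ℂ) ^ 2 * cosCosSin a b c x := by
  rw [cosCosSin, pd3_sepProd (hasDerivAt_sin_mul c),
    pd3_sepProd fun t => (hasDerivAt_cos_mul c t).const_mul c]
  funext x
  simp only [sepProd]
  push_cast
  ring

lemma lap_cosCosSin :
    lap (cosCosSin a b c) = fun x => -((a ^ 2 + b ^ 2 + c ^ 2 : ℝ) : ℂ) * cosCosSin a b c x := by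
  funext x
  rw [lap, pd1_pd1_cosCosSin, pd2_pd2_cosCosSin, pd3_pd3_cosCosSin]
  push_cast
  ring

lemma pd3_cosCosSin_zero : pd3 (cosCosSin a b c) (0, 0, 0) = c := by
  rw [cosCosSin, pd3_sepProd (hasDerivAt_sin_mul c)]
  simp [sepProd]

variable {x : ℝ × ℝ × ℝ}

lemma cosCosSin_eq_zero (hx : Real.sin (c * x.2.2) = 0) : cosCosSin a b c x = 0 := by
  simp [cosCosSin, sepProd, hx]

lemma pd1_pd2_cosCosSin_eq_zero (hx : Real.sin (c * x.2.2) = 0) :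
    pd1 (pd2 (cosCosSin a b c)) x = 0 := by
  rw [cosCosSin, pd2_sepProd (hasDerivAt_cos_mul b), pd1_sepProd (hasDerivAt_cos_mul a)]
  simp [sepProd, hx]

end CosCosSin

lemma sin_pi_nat_div_mul_eq_zero (k : ℕ) {l t : ℝ} (hl : l ≠ 0) (ht : t = 0 ∨ t = l) :
    Real.sin (π * k / l * t) = 0 := by
  rcases ht with rfl | rfl
  · simp
  · rw [div_mul_cancel₀ _ hl, mul_comm, Real.sin_nat_mul_pi]

end

theorem stmt6_general (l₁ l₂ l₃p ε μ ω : ℝ)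
    (hl₃p : 0 < l₃p)
    (hε : 0 < ε) (hμ : 0 < μ) (hω : 0 < ω)
    (k₁ k₂ k₃ : ℕ) (hk₃ : 1 ≤ k₃)
    (hω2 : ω ^ 2 = 4 * π ^ 2 / (ε * μ) * ((k₁ : ℝ) ^ 2 / l₁ ^ 2 + (k₂ : ℝ) ^ 2 / l₂ ^ 2
        + (k₃ : ℝ) ^ 2 / (4 * l₃p ^ 2)))
    (w : ℝ × ℝ × ℝ → ℂ)
    (hw : w = fun x => ((Real.cos (2 * π * (k₁ : ℝ) * x.1 / l₁) *
        Real.cos (2 * π * (k₂ : ℝ) * x.2.1 / l₂) *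
        Real.sin (π * (k₃ : ℝ) * x.2.2 / l₃p) : ℝ) : ℂ))
    (E H : ℝ × ℝ × ℝ → ℂ × ℂ × ℂ)
    (hH : H = fun x => (-(pd3 w x), 0, pd1 w x))
    (hE : E = fun x => (-(Complex.I * (ω : ℂ) * (ε : ℂ)))⁻¹ •
        ((pd1 (pd2 w) x, -(pd1 (pd1 w) x) - pd3 (pd3 w) x, pd2 (pd3 w) x) : ℂ × ℂ × ℂ)) :
    (∀ x : ℝ × ℝ × ℝ, curl3 E x = (Complex.I * (ω : ℂ) * (μ : ℂ)) • H x) ∧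
    (∀ x : ℝ × ℝ × ℝ, curl3 H x = (-(Complex.I * (ω : ℂ) * (ε : ℂ))) • E x) ∧
    (∀ x : ℝ × ℝ × ℝ, x.2.2 = 0 ∨ x.2.2 = l₃p → (E x).1 = 0 ∧ (E x).2.1 = 0) ∧
    ((H ((0, 0, 0) : ℝ × ℝ × ℝ)).1 = -((π * (k₃ : ℝ) / l₃p : ℝ) : ℂ) ∧
      (H ((0, 0, 0) : ℝ × ℝ × ℝ)).1 ≠ 0) ∧
    (∃ x : ℝ × ℝ × ℝ, x.2.2 = 0 ∧ (H x).1 ≠ 0) := by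
  have hw' : w = cosCosSin (2 * π * k₁ / l₁) (2 * π * k₂ / l₂) (π * k₃ / l₃p) := by
    rw [hw]; funext x; simp only [cosCosSin, sepProd]; ring_nf
  have hwavenumber : (2 * π * k₁ / l₁) ^ 2 + (2 * π * k₂ / l₂) ^ 2 + (π * k₃ / l₃p) ^ 2 =
      ω ^ 2 * ε * μ := by
    rw [hω2]; field_simp; ring
  have hsmooth : ContDiff ℝ _ w := hw' ▸ contDiff_cosCosSin _ _ _
  have hΔ : lap w = fun x => -((ω : ℂ) ^ 2 * ε * μ) * w x := by
    rw [hw', lap_cosCosSin, hwavenumber]; push_cast; rfl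
  have hK : -(I * ω * ε) ≠ 0 := by simp [hω.ne', hε.ne']
  have hKκ : (-(I * ω * ε))⁻¹ * (ω ^ 2 * ε * μ) = I * ω * μ := by
    rw [inv_mul_eq_iff_eq_mul₀ hK]; linear_combination (ω ^ 2 * ε * μ) * I_mul_I
  have hE' : E = fun x => (-(I * ω * ε))⁻¹ • curl3 (curlY w) x := by rw [hE, curl3_curlY hsmooth]
  have hH' : H = curlY w := hH
  have hH₁ : (H (0, 0, 0)).1 = -((π * k₃ / l₃p : ℝ) : ℂ) := by
    simp only [hH', curlY, hw', pd3_cosCosSin_zero]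
  have hH₁0 : (H (0, 0, 0)).1 ≠ 0 := by
    rw [hH₁, neg_ne_zero, ofReal_ne_zero]
    exact (div_pos (mul_pos pi_pos (Nat.cast_pos.mpr hk₃)) hl₃p).ne'
  refine ⟨fun x => ?_, fun x => ?_, fun x hx => ?_, ⟨hH₁, hH₁0⟩, ⟨(0, 0, 0), rfl, hH₁0⟩⟩
  · rw [hE', hH', curl3_smul_curl3_curlY _ hsmooth hΔ, hKκ]
  · rw [hE', hH', smul_inv_smul₀ hK]
  · have hsin := sin_pi_nat_div_mul_eq_zero k₃ hl₃p.ne' hx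
    simp [hE, hw', pd1_pd2_cosCosSin_eq_zero _ _ _ hsin, pd1_pd1_cosCosSin, pd3_pd3_cosCosSin,
      cosCosSin_eq_zero _ _ _ hsin]

/-- the full-reflection eigenfunction solves Maxwell's equations in the bulk
and satisfies `E₁ = E₂ = 0` on the interface and the top boundary, but `H₁` does not vanish
on the interface. -/
theorem stmt6 (l₁ l₂ l₃p l₃m ε μ ω : ℝ)
    (hl₁ : 0 < l₁) (hl₂ : 0 < l₂) (hl₃p : 0 < l₃p) (hl₃m : 0 < l₃m)
    (hε : 0 < ε) (hμ : 0 < μ) (hω : 0 < ω)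
    (k₁ k₂ k₃ : ℕ) (hk₃ : 1 ≤ k₃)
    (hω2 : ω ^ 2 = 4 * π ^ 2 / (ε * μ) * ((k₁ : ℝ) ^ 2 / l₁ ^ 2 + (k₂ : ℝ) ^ 2 / l₂ ^ 2
        + (k₃ : ℝ) ^ 2 / (4 * l₃p ^ 2)))
    (w : ℝ × ℝ × ℝ → ℂ)
    (hw : w = fun x => ((Real.cos (2 * π * (k₁ : ℝ) * x.1 / l₁) *
        Real.cos (2 * π * (k₂ : ℝ) * x.2.1 / l₂) *
        Real.sin (π * (k₃ : ℝ) * x.2.2 / l₃p) : ℝ) : ℂ))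
    (E H : ℝ × ℝ × ℝ → ℂ × ℂ × ℂ)
    (hH : H = fun x => (-(pd3 w x), 0, pd1 w x))
    (hE : E = fun x => (-(Complex.I * (ω : ℂ) * (ε : ℂ)))⁻¹ •
        ((pd1 (pd2 w) x, -(pd1 (pd1 w) x) - pd3 (pd3 w) x, pd2 (pd3 w) x) : ℂ × ℂ × ℂ)) :
    (∀ x : ℝ × ℝ × ℝ, curl3 E x = (Complex.I * (ω : ℂ) * (μ : ℂ)) • H x) ∧
    (∀ x : ℝ × ℝ × ℝ, curl3 H x = (-(Complex.I * (ω : ℂ) * (ε : ℂ))) • E x) ∧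
    (∀ x : ℝ × ℝ × ℝ, x.2.2 = 0 ∨ x.2.2 = l₃p → (E x).1 = 0 ∧ (E x).2.1 = 0) ∧
    ((H ((0, 0, 0) : ℝ × ℝ × ℝ)).1 = -((π * (k₃ : ℝ) / l₃p : ℝ) : ℂ) ∧
      (H ((0, 0, 0) : ℝ × ℝ × ℝ)).1 ≠ 0) ∧
    (∃ x : ℝ × ℝ × ℝ, x.2.2 = 0 ∧ (H x).1 ≠ 0) :=
  stmt6_general l₁ l₂ l₃p ε μ ω hl₃p hε hμ hω k₁ k₂ k₃ hk₃ hω2 w hw E H hH hE
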